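/- Under Assumption A, for every fixed a > 0: ∫₀ᵗ P(X > t−s) (P(X > s) − P(X > s+a)) ds ~ P(X > t) · ∫₀ᵃ P(X > s) ds as t → ∞ (i.e., the ratio of the two sides tends to 1). -/

import Mathlib

open MeasureTheory ProbabilityTheory Filter Set
open scoped ENNReal NNReal

noncomputable section

/-- The (right) tail function `t ↦ P(X > t)` of a random variable, as a real number. -/
def tail {Ω : Type*} [MeasurableSpace Ω] (μ : Measure Ω) (X : Ω → ℝ) (t : ℝ) : ℝ :=
  (μ {ω | t < X ω}).toReal

section Aux

variable {Ω : Type*} [MeasurableSpace Ω] (μ : Measure Ω) [IsProbabilityMeasure μ] (X : Ω → ℝ)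

lemma tail_nonneg (t : ℝ) : 0 ≤ tail μ X t := ENNReal.toReal_nonneg

lemma tail_le_one (t : ℝ) : tail μ X t ≤ 1 := by
  have := ENNReal.toReal_mono (by simp : (1 : ℝ≥0∞) ≠ ∞) (prob_le_one (μ := μ) (s := {ω | t < X ω}))
  simpa [tail] using this

lemma tail_anti : Antitone (tail μ X) := fun s t hst =>
  ENNReal.toReal_mono (measure_ne_top μ _)
    (measure_mono fun ω h => lt_of_le_of_lt hst h)

lemma tail_meas : Measurable (tail μ X) := (tail_anti μ X).measurable

/-- A measurable function into `[0,1]` is interval integrable on any interval. -/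
lemma ii_of_bdd {f : ℝ → ℝ} (hf : Measurable f) (h0 : ∀ x, 0 ≤ f x) (h1 : ∀ x, f x ≤ 1)
    (a b : ℝ) : IntervalIntegrable f volume a b := by
  rw [intervalIntegrable_iff]
  apply Measure.integrableOn_of_bounded (M := 1) measure_Ioc_lt_top.ne hf.aestronglyMeasurable
  filter_upwards with x
  rw [Real.norm_eq_abs, abs_le]
  exact ⟨by linarith [h0 x], h1 x⟩

lemma tail_layercake (hint : Integrable X μ) :
    ∫ ω, max (X ω) 0 ∂μ = ∫ t in Ioi (0:ℝ), tail μ X t := by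
  have h := (hint.pos_part).integral_eq_integral_meas_lt
    (Eventually.of_forall fun ω => le_max_right _ _)
  rw [h]
  apply setIntegral_congr_fun measurableSet_Ioi
  intro t ht
  have hset : {a : Ω | t < max (X a) 0} = {ω : Ω | t < X ω} := by
    ext ω
    simp only [mem_setOf_eq, lt_max_iff]
    exact ⟨fun h => h.resolve_right (not_lt.2 (le_of_lt (mem_Ioi.mp ht))), Or.inl⟩
  exact congrArg ENNReal.toReal (congrArg μ hset)

lemma tail_integrableOn (hint : Integrable X μ) :
    IntegrableOn (tail μ X) (Ioi (0:ℝ)) := by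
  refine ⟨(tail_meas μ X).aestronglyMeasurable.restrict, ?_⟩
  rw [hasFiniteIntegral_iff_ofReal (Eventually.of_forall fun t => tail_nonneg μ X t)]
  have key : (∫⁻ t in Ioi (0:ℝ), ENNReal.ofReal (tail μ X t))
      = ∫⁻ t in Ioi (0:ℝ), μ {ω | t < X ω} := by
    apply setLIntegral_congr_fun measurableSet_Ioi
    exact fun t _ => ENNReal.ofReal_toReal (measure_ne_top μ _)
  rw [key]
  have h2 : (∫⁻ t in Ioi (0:ℝ), μ {ω | t < X ω})
      = ∫⁻ t in Ioi (0:ℝ), μ {ω | t < max (X ω) 0} := by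
    apply setLIntegral_congr_fun measurableSet_Ioi
    refine fun t ht => ?_
    show μ {ω | t < X ω} = μ {ω | t < max (X ω) 0}
    congr 1
    ext ω
    simp only [mem_setOf_eq, lt_max_iff]
    constructor
    · exact Or.inl
    · rintro (h | h)
      · exact h
      · exact absurd h (not_lt.2 (le_of_lt ht))
  rw [h2, ← lintegral_eq_lintegral_meas_lt (f := fun ω => max (X ω) 0) μ
    (Eventually.of_forall fun ω => le_max_right _ _)
    (hint.aemeasurable.max aemeasurable_const)]
  exact hint.pos_part.lintegral_lt_top

/-- The integral of the tail over `Ioi c` is positive, for `c ≥ 0`. -/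
lemma tail_integral_Ioi_pos (hint : Integrable X μ)
    (hpos : ∀ t : ℝ, 0 < μ {ω | t < X ω}) {c : ℝ} (hc : 0 ≤ c) :
    0 < ∫ t in Ioi c, tail μ X t := by
  have hmono : IntegrableOn (tail μ X) (Ioi c) :=
    (tail_integrableOn μ X hint).mono_set (Ioi_subset_Ioi hc)
  have h1 : ∫ t in Ioc c (c+1), tail μ X t ≤ ∫ t in Ioi c, tail μ X t := by
    apply setIntegral_mono_set hmono
      (Eventually.of_forall fun t => tail_nonneg μ X t)
    exact Eventually.of_forall (fun t ht => ht.1)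
  have h2 : tail μ X (c+1) ≤ ∫ t in Ioc c (c+1), tail μ X t := by
    have : ∫ t in Ioc c (c+1), tail μ X (c+1) ∂volume ≤ ∫ t in Ioc c (c+1), tail μ X t := by
      apply setIntegral_mono_on (integrableOn_const measure_Ioc_lt_top.ne)
        (hmono.mono_set Ioc_subset_Ioi_self) measurableSet_Ioc
      exact fun t ht => tail_anti μ X ht.2
    simpa using this
  have h3 : 0 < tail μ X (c+1) :=
    ENNReal.toReal_pos (hpos (c+1)).ne' (measure_ne_top μ _)
  linarith

end Aux

/-- under Assumption A, for every fixed `a > 0`,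
`∫₀ᵗ P(X > t−s) (P(X > s) − P(X > s+a)) ds ~ P(X > t) · ∫₀ᵃ P(X > s) ds`
as `t → ∞`. -/
theorem statement13 {Ω : Type*} [MeasurableSpace Ω] (μ : Measure Ω)
    [IsProbabilityMeasure μ]
    (X : Ω → ℝ) (hX : Measurable X)
    (hint : Integrable X μ) (hneg : ∫ ω, X ω ∂μ < 0)
    (hpos : ∀ t : ℝ, 0 < μ {ω | t < X ω})
    -- Assumption A: `X⁺ ∈ S*`
    (hSstar : Tendsto (fun t => (∫ s in (0:ℝ)..t, tail μ X (t - s) * tail μ X s) /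
      (2 * (∫ ω, max (X ω) 0 ∂μ) * tail μ X t)) atTop (nhds 1)) :
    ∀ a : ℝ, 0 < a →
      Tendsto (fun t =>
          (∫ s in (0:ℝ)..t, tail μ X (t - s) * (tail μ X s - tail μ X (s + a))) /
            (tail μ X t * ∫ s in (0:ℝ)..a, tail μ X s))
        atTop (nhds 1) := by
  intro a ha
  set F : ℝ → ℝ := tail μ X with hF_def
  set m : ℝ := ∫ ω, max (X ω) 0 ∂μ with hm_def
  have hF0 : ∀ t, 0 < F t := fun t =>
    ENNReal.toReal_pos (hpos t).ne' (measure_ne_top μ _)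
  have hFnn : ∀ t, 0 ≤ F t := fun t => (hF0 t).le
  have hFanti : Antitone F := tail_anti μ X
  have hFmeas : Measurable F := tail_meas μ X
  have hFle1 : ∀ t, F t ≤ 1 := tail_le_one μ X
  -- interval integrability of all relevant functions
  have iiF : ∀ c d : ℝ, IntervalIntegrable F volume c d :=
    ii_of_bdd hFmeas hFnn hFle1
  have iiP : ∀ t c d : ℝ, IntervalIntegrable (fun s => F (t - s) * F s) volume c d := by
    intro t c d
    apply ii_of_bdd ((hFmeas.comp (measurable_const.sub measurable_id)).mul hFmeas)
    · exact fun x => mul_nonneg (hFnn _) (hFnn _)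
    · exact fun x => mul_le_one₀ (hFle1 _) (hFnn _) (hFle1 _)
  have iiQ : ∀ t c d : ℝ, IntervalIntegrable (fun s => F (t - s) * F (s + a)) volume c d := by
    intro t c d
    apply ii_of_bdd ((hFmeas.comp (measurable_const.sub measurable_id)).mul
      (hFmeas.comp (measurable_id.add_const a)))
    · exact fun x => mul_nonneg (hFnn _) (hFnn _)
    · exact fun x => mul_le_one₀ (hFle1 _) (hFnn _) (hFle1 _)
  set I : ℝ → ℝ := fun t => ∫ s in (0:ℝ)..t, F (t - s) * F s with hI_def
  set A : ℝ := ∫ s in (0:ℝ)..a, F s with hA_def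
  have hA : 0 < A :=
    intervalIntegral.intervalIntegral_pos_of_pos_on (iiF 0 a) (fun x _ => hF0 x) ha
  have hmA : m = A + ∫ t in Ioi a, F t := by
    rw [hm_def, tail_layercake μ X hint]
    have hsplit : Ioc (0:ℝ) a ∪ Ioi a = Ioi 0 := Ioc_union_Ioi_eq_Ioi ha.le
    rw [← hsplit, setIntegral_union (Ioc_disjoint_Ioi le_rfl) measurableSet_Ioi
      ((tail_integrableOn μ X hint).mono_set (by rw [← hsplit]; exact subset_union_left))
      ((tail_integrableOn μ X hint).mono_set (by rw [← hsplit]; exact subset_union_right))]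
    congr 1
    rw [hA_def, intervalIntegral.integral_of_le ha.le]
  have hIoiA : 0 < ∫ t in Ioi a, F t := tail_integral_Ioi_pos μ X hint hpos ha.le
  have hm : 0 < m := by rw [hmA]; positivity
  -- Step 1: I t / F t → 2 m
  have hI : Tendsto (fun t => I t / F t) atTop (nhds (2 * m)) := by
    have h := hSstar.mul_const (2 * m)
    rw [one_mul] at h
    refine h.congr fun t => ?_
    have h1 : F t ≠ 0 := (hF0 t).ne'
    have h2 : m ≠ 0 := hm.ne'
    field_simp
    try ring
  -- Step 2: long-tailedness, F (t - a) / F t → 1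
  have hsym : ∀ t : ℝ, I t = 2 * ∫ s in (0:ℝ)..(t/2), F (t - s) * F s := by
    intro t
    have hadd : (∫ s in (0:ℝ)..(t/2), F (t - s) * F s)
        + ∫ s in (t/2)..t, F (t - s) * F s = I t :=
      intervalIntegral.integral_add_adjacent_intervals (iiP t 0 (t/2)) (iiP t (t/2) t)
    have hsub := intervalIntegral.integral_comp_sub_left
      (a := (0:ℝ)) (b := t/2) (fun u => F (t - u) * F u) t
    simp only [sub_sub_cancel, sub_zero] at hsub
    rw [sub_half] at hsub
    -- hsub : ∫ x in 0..t/2, F x * F (t - x) = ∫ x in t/2..t, F (t-x) * F x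
    have h2 : (∫ s in (t/2)..t, F (t - s) * F s) = ∫ s in (0:ℝ)..(t/2), F (t - s) * F s := by
      rw [← hsub]
      apply intervalIntegral.integral_congr
      intro x _
      exact mul_comm _ _
    rw [← hadd, h2]
    ring
  have hlong : Tendsto (fun t => F (t - a) / F t) atTop (nhds 1) := by
    set B : ℝ → ℝ := fun t => ∫ s in a..(t/2), F s with hB_def
    have hBlim : Tendsto B atTop (nhds (∫ t in Ioi a, F t)) := by
      apply intervalIntegral_tendsto_integral_Ioi a
        ((tail_integrableOn μ X hint).mono_set (Ioi_subset_Ioi ha.le))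
      exact (tendsto_id.atTop_div_const two_pos)
    set g : ℝ → ℝ := fun t => (I t / (2 * F t) - A) / B t with hg_def
    have hglim : Tendsto g atTop (nhds 1) := by
      have hnum : Tendsto (fun t => I t / (2 * F t) - A) atTop (nhds (m - A)) := by
        have : Tendsto (fun t => I t / F t / 2) atTop (nhds (2 * m / 2)) := hI.div_const 2
        rw [show (2:ℝ) * m / 2 = m by ring] at this
        have := this.sub_const A
        refine this.congr fun t => ?_
        rw [div_div, mul_comm (F t) 2]
      have := hnum.div hBlim (by linarith)
      rw [show (m - A) / (∫ t in Ioi a, F t) = 1 by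
        rw [hmA, add_sub_cancel_left, div_self hIoiA.ne']] at this
      exact this
    apply tendsto_of_tendsto_of_tendsto_of_le_of_le' tendsto_const_nhds hglim
    · exact Eventually.of_forall fun t => (one_le_div (hF0 t)).2 (hFanti (by linarith))
    · filter_upwards [eventually_gt_atTop (2 * a)] with t ht
      have hat : a < t / 2 := by linarith
      have hBt : 0 < B t :=
        intervalIntegral.intervalIntegral_pos_of_pos_on (iiF a (t/2)) (fun x _ => hF0 x) hat
      -- key inequality : F t * A + F (t - a) * B t ≤ I t / 2
      have h1 : F t * A ≤ ∫ s in (0:ℝ)..a, F (t - s) * F s := by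
        have : (∫ s in (0:ℝ)..a, F t * F s) ≤ ∫ s in (0:ℝ)..a, F (t - s) * F s := by
          apply intervalIntegral.integral_mono_on ha.le ((iiF 0 a).const_mul _) (iiP t 0 a)
          intro s hs
          exact mul_le_mul_of_nonneg_right (hFanti (by linarith [hs.1])) (hFnn s)
        rwa [intervalIntegral.integral_const_mul] at this
      have h2 : F (t - a) * B t ≤ ∫ s in a..(t/2), F (t - s) * F s := by
        have : (∫ s in a..(t/2), F (t - a) * F s) ≤ ∫ s in a..(t/2), F (t - s) * F s := by
          apply intervalIntegral.integral_mono_on hat.le ((iiF a (t/2)).const_mul _)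
            (iiP t a (t/2))
          intro s hs
          exact mul_le_mul_of_nonneg_right (hFanti (by linarith [hs.1])) (hFnn s)
        rwa [intervalIntegral.integral_const_mul] at this
      have hadd : (∫ s in (0:ℝ)..a, F (t - s) * F s) + ∫ s in a..(t/2), F (t - s) * F s
          = ∫ s in (0:ℝ)..(t/2), F (t - s) * F s :=
        intervalIntegral.integral_add_adjacent_intervals (iiP t 0 a) (iiP t a (t/2))
      have hkey : F t * A + F (t - a) * B t ≤ I t / 2 := by
        rw [hsym t]
        rw [← hadd]
        · linarith
      rw [hg_def]
      rw [div_le_div_iff₀ (hF0 t) hBt]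
      have : (I t / (2 * F t) - A) * F t = I t / 2 - A * F t := by
        field_simp [(hF0 t).ne']
        try ring
      rw [this]
      linarith
  -- Step 3: shifted ratios
  have hlong' : Tendsto (fun t => F t / F (t + a)) atTop (nhds 1) := by
    refine (hlong.comp (tendsto_atTop_add_const_right atTop a tendsto_id)).congr fun t => ?_
    simp only [Function.comp_apply, id_eq, add_sub_cancel_right]
  have hshift : Tendsto (fun t => F (t + a) / F t) atTop (nhds 1) := by
    have := hlong'.inv₀ one_ne_zero
    rw [inv_one] at this
    refine this.congr fun t => ?_
    rw [inv_div]
  -- Step 4: the identity J t = I t - I (t+a) + K t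
  set K : ℝ → ℝ := fun t => ∫ u in (0:ℝ)..a, F (t + a - u) * F u with hK_def
  have hident : ∀ t : ℝ,
      (∫ s in (0:ℝ)..t, F (t - s) * (F s - F (s + a))) = I t - I (t + a) + K t := by
    intro t
    have hsub : (∫ s in (0:ℝ)..t, F (t - s) * (F s - F (s + a)))
        = (∫ s in (0:ℝ)..t, F (t - s) * F s) - ∫ s in (0:ℝ)..t, F (t - s) * F (s + a) := by
      rw [← intervalIntegral.integral_sub (iiP t 0 t) (iiQ t 0 t)]
      apply intervalIntegral.integral_congr
      intro x _
      ring
    have hcomp := intervalIntegral.integral_comp_add_right (a := (0:ℝ)) (b := t)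
      (fun u => F (t + a - u) * F u) a
    -- hcomp : ∫ s in 0..t, F (t + a - (s + a)) * F (s + a) = ∫ u in (0+a)..(t+a), ...
    simp only [add_sub_add_right_eq_sub, zero_add] at hcomp
    -- hcomp : ∫ s in 0..t, F (t - s) * F (s + a) = ∫ u in a..(t+a), F (t + a - u) * F u
    have hadd : (∫ u in (0:ℝ)..a, F (t + a - u) * F u)
        + ∫ u in a..(t+a), F (t + a - u) * F u = I (t + a) :=
      intervalIntegral.integral_add_adjacent_intervals (iiP (t+a) 0 a) (iiP (t+a) a (t+a))
    have hKt : K t = ∫ u in (0:ℝ)..a, F (t + a - u) * F u := rfl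
    rw [hsub, hcomp, ← hadd, hKt]
    ring
  -- Step 5: K t / F t → A
  have hK : Tendsto (fun t => K t / F t) atTop (nhds A) := by
    have hup : ∀ t, K t / F t ≤ A := by
      intro t
      rw [div_le_iff₀ (hF0 t)]
      have : K t ≤ ∫ u in (0:ℝ)..a, F t * F u := by
        apply intervalIntegral.integral_mono_on ha.le (iiP (t+a) 0 a) ((iiF 0 a).const_mul _)
        intro u hu
        exact mul_le_mul_of_nonneg_right (hFanti (by linarith [hu.2])) (hFnn u)
      rw [intervalIntegral.integral_const_mul] at this
      calc K t ≤ F t * A := this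
        _ = A * F t := mul_comm _ _
    have hlo : ∀ t, F (t + a) / F t * A ≤ K t / F t := by
      intro t
      rw [div_mul_eq_mul_div, div_le_div_iff_of_pos_right (hF0 t)]
      have : (∫ u in (0:ℝ)..a, F (t + a) * F u) ≤ K t := by
        apply intervalIntegral.integral_mono_on ha.le ((iiF 0 a).const_mul _) (iiP (t+a) 0 a)
        intro u hu
        exact mul_le_mul_of_nonneg_right (hFanti (by linarith [hu.1])) (hFnn u)
      rwa [intervalIntegral.integral_const_mul] at this
    have hlolim : Tendsto (fun t => F (t + a) / F t * A) atTop (nhds A) := by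
      have := hshift.mul_const A
      rwa [one_mul] at this
    exact tendsto_of_tendsto_of_tendsto_of_le_of_le hlolim tendsto_const_nhds hlo hup
  -- Step 6: assemble
  have hI2 : Tendsto (fun t => I (t + a) / F (t + a)) atTop (nhds (2 * m)) :=
    hI.comp (tendsto_atTop_add_const_right atTop a tendsto_id)
  have hI3 : Tendsto (fun t => I (t + a) / F t) atTop (nhds (2 * m)) := by
    have := hI2.mul hshift
    rw [mul_one] at this
    refine this.congr fun t => ?_
    rw [div_mul_div_comm, mul_comm (F (t + a)) (F t), mul_div_mul_right _ _ (hF0 (t + a)).ne']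
  have hN : Tendsto (fun t =>
      (∫ s in (0:ℝ)..t, F (t - s) * (F s - F (s + a))) / F t) atTop (nhds A) := by
    have := (hI.sub hI3).add hK
    rw [sub_self, zero_add] at this
    refine this.congr fun t => ?_
    rw [hident t]
    ring
  have := hN.div_const A
  rw [div_self hA.ne'] at this
  refine this.congr fun t => ?_
  rw [div_div]
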